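/- arXiv:math/0507269 — 5 statements merged into one kernel-verified Lean document; each statement's English description precedes it below -/
import Mathlib

section
/- Let v_{i,j} ∈ ℝ^d for i ∈ [m], j ∈ [d+1] be a matrix of vectors such that for each column j, the origin 0 lies in the convex hull of {v_{1,j},…,v_{m,j}}. Then there exists a function α : [d+1] → [m] such that 0 ∈ conv{v_{α(1),1}, v_{α(2),2}, …, v_{α(d+1),d+1}}. -/
open Metric Set Module
open scoped RealInnerProductSpace

private lemma colorful_key (d m : ℕ) (hm : 0 < m)
    (u : Fin m → Fin (d + 1) → EuclideanSpace ℝ (Fin d))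
    (hcol : ∀ j : Fin (d + 1),
      (0 : EuclideanSpace ℝ (Fin d)) ∈ convexHull ℝ (Set.range (fun i => u i j))) :
    ∃ α : Fin (d + 1) → Fin m,
      (0 : EuclideanSpace ℝ (Fin d)) ∈ convexHull ℝ (Set.range (fun j => u (α j) j)) := by
  classical
  haveI : Nonempty (Fin m) := ⟨⟨0, hm⟩⟩
  obtain ⟨α, -, hmin⟩ := Finset.exists_min_image (Finset.univ : Finset (Fin (d+1) → Fin m))
    (fun β => Metric.infDist 0 (convexHull ℝ (Set.range fun j => u (β j) j)))
    Finset.univ_nonempty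
  set pt : Fin (d+1) → (EuclideanSpace ℝ (Fin d)) := fun j => u (α j) j with hpt
  set K := convexHull ℝ (Set.range pt) with hKdef
  have hKcpt : IsCompact K := (Set.finite_range pt).isCompact_convexHull ℝ
  have hKne : K.Nonempty := (Set.range_nonempty pt).convexHull
  obtain ⟨x, hxK, hxd⟩ := hKcpt.exists_infDist_eq_dist hKne 0
  refine ⟨α, ?_⟩
  have hx0 : x = 0 := by
    by_contra hx0
    -- projection characterization: all of K is in the halfspace ⟪x, ·⟫ ≥ ‖x‖²
    have hproj : ∀ y ∈ K, ‖x‖^2 ≤ ⟪x, y⟫ := by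
      have hiInf : ‖(0:(EuclideanSpace ℝ (Fin d))) - x‖ = ⨅ w : K, ‖(0:(EuclideanSpace ℝ (Fin d))) - w‖ := by
        rw [show ‖(0:(EuclideanSpace ℝ (Fin d))) - x‖ = dist 0 x from (dist_eq_norm _ _).symm, ← hxd,
          Metric.infDist_eq_iInf]
        simp [dist_eq_norm]
      intro y hy
      have h := (norm_eq_iInf_iff_real_inner_le_zero (convex_convexHull ℝ _) hxK).1 hiInf y hy
      rw [zero_sub, inner_neg_left, inner_sub_right, real_inner_self_eq_norm_sq] at h
      linarith
    -- x is in the convex hull of the points lying on the supporting hyperplane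
    set H : Set (EuclideanSpace ℝ (Fin d)) := {y | ⟪x, y⟫ = ‖x‖^2} with hHdef
    have hxH : x ∈ convexHull ℝ (Set.range pt ∩ H) := by
      have hrep := hxK
      rw [hKdef, convexHull_eq] at hrep
      obtain ⟨ι', t', w, z, hw0, hw1, hz, hxc⟩ := hrep
      have hterm : ∀ i ∈ t', w i * (⟪x, z i⟫ - ‖x‖^2) = 0 := by
        rw [← Finset.sum_eq_zero_iff_of_nonneg]
        · have hx' : ∑ i ∈ t', w i • z i = x := by
            rw [← Finset.centerMass_eq_of_sum_1 _ _ hw1, hxc]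
          have h2 : ⟪x, ∑ i ∈ t', w i • z i⟫ = ‖x‖^2 := by
            rw [hx', real_inner_self_eq_norm_sq]
          rw [inner_sum] at h2
          simp only [real_inner_smul_right] at h2
          have h3 : ∑ i ∈ t', w i * (⟪x, z i⟫ - ‖x‖^2)
              = (∑ i ∈ t', w i * ⟪x, z i⟫) - (∑ i ∈ t', w i) * ‖x‖^2 := by
            rw [Finset.sum_mul, ← Finset.sum_sub_distrib]
            exact Finset.sum_congr rfl fun i _ => by ring
          rw [h3, h2, hw1]; ring
        · intro i hi
          have hzi : z i ∈ K := subset_convexHull ℝ _ (hz i hi)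
          have := hproj (z i) hzi
          have := hw0 i hi
          nlinarith
      have hxc' : (t'.filter (fun i => w i ≠ 0)).centerMass w z = x := by
        rw [Finset.centerMass_filter_ne_zero, hxc]
      rw [← hxc']
      apply Finset.centerMass_mem_convexHull
      · intro i hi; exact hw0 i (Finset.mem_of_mem_filter i hi)
      · have : ∑ i ∈ t'.filter (fun i => w i ≠ 0), w i = 1 := by
          rw [Finset.sum_filter_ne_zero, hw1]
        rw [this]; exact one_pos
      · intro i hi
        rw [Finset.mem_filter] at hi
        refine ⟨hz i hi.1, ?_⟩
        have := hterm i hi.1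
        have hwi := hi.2
        have : ⟪x, z i⟫ - ‖x‖^2 = 0 := by
          rcases mul_eq_zero.1 this with h | h
          · exact absurd h hwi
          · exact h
        show ⟪x, z i⟫ = ‖x‖^2
        linarith
    -- Caratheodory within the hyperplane
    rw [convexHull_eq_union] at hxH
    simp only [Set.mem_iUnion] at hxH
    obtain ⟨S, hSsub, hSai, hxS⟩ := hxH
    have hcard : S.card ≤ d := by
      have h1 := hSai.card_le_finrank_succ
      have h2 : vectorSpan ℝ (Set.range ((↑) : S → (EuclideanSpace ℝ (Fin d)))) ≤ (ℝ ∙ x)ᗮ := by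
        rw [Subtype.range_coe, vectorSpan_def, Submodule.span_le]
        intro y hy
        rw [Set.mem_vsub] at hy
        obtain ⟨a, ha, b, hb, rfl⟩ := hy
        rw [SetLike.mem_coe, Submodule.mem_orthogonal_singleton_iff_inner_right]
        have ha' : ⟪x, a⟫ = ‖x‖^2 := (hSsub ha).2
        have hb' : ⟪x, b⟫ = ‖x‖^2 := (hSsub hb).2
        have : (a -ᵥ b : (EuclideanSpace ℝ (Fin d))) = a - b := rfl
        rw [this, inner_sub_right, ha', hb', sub_self]
      have h3 : finrank ℝ (ℝ ∙ x) = 1 := finrank_span_singleton hx0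
      have h4 := (ℝ ∙ x).finrank_add_finrank_orthogonal
      have h5 : finrank ℝ (EuclideanSpace ℝ (Fin d)) = d := finrank_euclideanSpace_fin
      have h6 := Submodule.finrank_mono h2
      rw [Fintype.card_coe] at h1
      omega
    -- find an unused colour j₀
    have hch : ∀ y ∈ S, ∃ j, pt j = y := fun y hy => (hSsub hy).1
    set c : (EuclideanSpace ℝ (Fin d)) → Fin (d+1) := fun y =>
      if h : ∃ j, pt j = y then h.choose else ⟨0, Nat.succ_pos d⟩ with hcdef
    have hcy : ∀ y ∈ S, pt (c y) = y := by
      intro y hy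
      have h := hch y hy
      simp only [hcdef, dif_pos h]
      exact h.choose_spec
    have hj₀ : ∃ j₀ : Fin (d+1), j₀ ∉ S.image c := by
      by_contra h
      push_neg at h
      have : (Finset.univ : Finset (Fin (d+1))) ⊆ S.image c := fun j _ => h j
      have hc1 := Finset.card_le_card this
      have hc2 := Finset.card_image_le (f := c) (s := S)
      simp [Finset.card_univ] at hc1
      omega
    obtain ⟨j₀, hj₀⟩ := hj₀
    -- find a replacement point with nonpositive inner product with x
    have hiw : ∃ i₀, ⟪x, u i₀ j₀⟫ ≤ 0 := by
      by_contra h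
      push_neg at h
      have hsub : Set.range (fun i => u i j₀) ⊆ {y : (EuclideanSpace ℝ (Fin d)) | 0 < ⟪x, y⟫} := by
        rintro _ ⟨i, rfl⟩; exact h i
      have hlin : IsLinearMap ℝ (fun y : (EuclideanSpace ℝ (Fin d)) => ⟪x, y⟫) :=
        ⟨fun a b => inner_add_right x a b, fun r a => real_inner_smul_right x a r⟩
      have hcvx : Convex ℝ {y : (EuclideanSpace ℝ (Fin d)) | 0 < ⟪x, y⟫} := convex_halfSpace_gt hlin 0
      have h0 := convexHull_min hsub hcvx (hcol j₀)
      simp only [Set.mem_setOf_eq, inner_zero_right] at h0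
      exact lt_irrefl 0 h0
    obtain ⟨i₀, hi₀⟩ := hiw
    -- the swapped transversal
    set α' : Fin (d+1) → Fin m := Function.update α j₀ i₀ with hα'
    set K' := convexHull ℝ (Set.range fun j => u (α' j) j) with hK'def
    have hSK' : (S : Set (EuclideanSpace ℝ (Fin d))) ⊆ Set.range fun j => u (α' j) j := by
      intro y hy
      refine ⟨c y, ?_⟩
      have hcj : c y ≠ j₀ := by
        intro hc
        exact hj₀ (hc ▸ Finset.mem_image_of_mem c hy)
      show u (α' (c y)) (c y) = y
      rw [hα', Function.update_of_ne hcj]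
      exact hcy y hy
    have hxK' : x ∈ K' := convexHull_min (hSK'.trans (subset_convexHull ℝ _))
      (convex_convexHull ℝ _) hxS
    have hwK' : u i₀ j₀ ∈ K' := by
      apply subset_convexHull ℝ _
      refine ⟨j₀, ?_⟩
      show u (α' j₀) j₀ = u i₀ j₀
      rw [hα', Function.update_self]
    -- move slightly towards the replacement point
    set wp : (EuclideanSpace ℝ (Fin d)) := u i₀ j₀ with hwp
    set q : ℝ := ‖wp - x‖^2 with hq
    have hq0 : 0 ≤ q := by positivity
    have hx2 : (0:ℝ) < ‖x‖^2 := by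
      have := norm_pos_iff.2 hx0
      positivity
    set t : ℝ := min 1 (‖x‖^2 / (q + 1)) with ht
    have ht0 : 0 < t := lt_min one_pos (div_pos hx2 (by linarith))
    have ht1 : t ≤ 1 := min_le_left _ _
    have htq : t * q < 2 * ‖x‖^2 := by
      have h1 : t ≤ ‖x‖^2 / (q + 1) := min_le_right _ _
      have h2 : t * q ≤ (‖x‖^2 / (q + 1)) * q := by
        apply mul_le_mul_of_nonneg_right h1 hq0
      have h3 : (‖x‖^2 / (q + 1)) * q ≤ ‖x‖^2 := by
        rw [div_mul_eq_mul_div, div_le_iff₀ (by linarith)]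
        nlinarith
      linarith
    set z : (EuclideanSpace ℝ (Fin d)) := x + t • (wp - x) with hz
    have hzK' : z ∈ K' := by
      have hcomb := (convex_convexHull ℝ (Set.range fun j => u (α' j) j)) hxK' hwK'
        (a := 1 - t) (b := t) (by linarith) (le_of_lt ht0) (by ring)
      have : (1 - t) • x + t • wp = z := by
        rw [hz]; module
      rwa [this] at hcomb
    have hinner : ⟪x, wp - x⟫ ≤ -‖x‖^2 := by
      rw [inner_sub_right, real_inner_self_eq_norm_sq]
      linarith
    have hz2 : ‖z‖^2 = ‖x‖^2 + 2*(t*⟪x, wp - x⟫) + t^2*q := by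
      rw [hz, norm_add_sq_real, real_inner_smul_right, norm_smul, hq]
      rw [Real.norm_eq_abs, mul_pow, sq_abs]
    have hzlt : ‖z‖^2 < ‖x‖^2 := by
      have h1 : t^2 * q = t * (t * q) := by ring
      nlinarith
    have hzx : ‖z‖ < ‖x‖ := lt_of_pow_lt_pow_left₀ 2 (norm_nonneg x) hzlt
    -- contradiction with minimality
    have hle := hmin α' (Finset.mem_univ α')
    have h1 : Metric.infDist 0 K' ≤ ‖z‖ := by
      have := Metric.infDist_le_dist_of_mem (x := (0 : EuclideanSpace ℝ (Fin d))) hzK'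
      rwa [dist_eq_norm, zero_sub, norm_neg] at this
    have h2 : Metric.infDist 0 K = ‖x‖ := by
      rw [hxd, dist_eq_norm, zero_sub, norm_neg]
    rw [hK'def] at h1
    rw [hKdef] at h2
    simp only [hpt] at h2
    linarith
  rw [hx0] at hxK
  rw [hKdef, hpt] at hxK
  exact hxK

/-- Bárány's colorful Carathéodory theorem. -/
theorem colorful_caratheodory (d m : ℕ) (hm : 0 < m)
    (v : Fin m → Fin (d + 1) → (Fin d → ℝ))
    (hcol : ∀ j : Fin (d + 1), (0 : Fin d → ℝ) ∈ convexHull ℝ (Set.range (fun i => v i j))) :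
    ∃ α : Fin (d + 1) → Fin m,
      (0 : Fin d → ℝ) ∈ convexHull ℝ (Set.range (fun j => v (α j) j)) := by
  set L : (Fin d → ℝ) ≃ₗ[ℝ] EuclideanSpace ℝ (Fin d) :=
    (WithLp.linearEquiv 2 ℝ (Fin d → ℝ)).symm with hL
  have himg : ∀ s : Set (Fin d → ℝ),
      (0 : Fin d → ℝ) ∈ convexHull ℝ s ↔
      (0 : EuclideanSpace ℝ (Fin d)) ∈ convexHull ℝ (L '' s) := by
    intro s
    have himg' := L.toLinearMap.image_convexHull s
    simp only [LinearEquiv.coe_coe] at himg'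
    rw [← himg']
    constructor
    · intro h
      exact ⟨0, h, L.map_zero⟩
    · rintro ⟨y, hy, hy0⟩
      have : y = 0 := by
        have := congrArg L.symm hy0
        simpa using this
      rwa [this] at hy
  obtain ⟨α, hα⟩ := colorful_key d m hm (fun i j => L (v i j)) (by
    intro j
    have := (himg (Set.range fun i => v i j)).1 (hcol j)
    rwa [← Set.range_comp] at this)
  refine ⟨α, ?_⟩
  rw [himg, ← Set.range_comp]
  exact hα
end

section
/- Let G be a finite group of order k acting linearly on a real vector space V with V^G = {0} (i.e., the only vector fixed by every element of G is 0). Let N = n(k−1) and let E_N G = G^{*(N+1)} be the (N+1)-fold join of G viewed as a 0-dimensional simplicial complex, with vertex set G × [N+1] and diagonal G-action. Suppose φ : G × [N+1] → V is G-equivariant, meaning φ(g·h, j) = g·φ(h, j) for all g, h ∈ G and j ∈ [N+1]. Then there exists a function α : [N+1] → G such that 0 ∈ conv{φ(α(1),1), …, φ(α(N+1), N+1)}; equivalently, there is a simplex σ of E_N G with 0 ∈ conv(φ(V(σ))). -/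
open Module Metric Set Finset
open scoped RealInnerProductSpace

/-- Colorful Carathéodory-style lemma in a finite-dimensional real inner product space:
if each "color class" sums to zero, a rainbow selection captures the origin. -/
theorem colorful_capture {E : Type*} [NormedAddCommGroup E] [InnerProductSpace ℝ E]
    [FiniteDimensional ℝ E] {N : ℕ} (hdim : finrank ℝ E = N)
    {G : Type*} [Fintype G] [Nonempty G]
    (f : G → Fin (N + 1) → E) (hsum : ∀ j, ∑ g : G, f g j = 0) :
    ∃ α : Fin (N + 1) → G, (0 : E) ∈ convexHull ℝ (Set.range fun j => f (α j) j) := by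
  classical
  set K : (Fin (N + 1) → G) → Set E :=
    fun α => convexHull ℝ (Set.range fun j => f (α j) j) with hK
  have hKconv : ∀ α, Convex ℝ (K α) := fun α => convex_convexHull ℝ _
  have hKcpt : ∀ α, IsCompact (K α) := fun α => (Set.finite_range _).isCompact_convexHull (𝕜 := ℝ)
  have hKne : ∀ α, (K α).Nonempty := fun α =>
    ⟨f (α 0) 0, subset_convexHull ℝ _ ⟨0, rfl⟩⟩
  obtain ⟨α, hmin⟩ := Finite.exists_min (fun α => infDist 0 (K α))
  refine ⟨α, ?_⟩
  show (0:E) ∈ K α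
  by_contra h0
  have hd : 0 < infDist 0 (K α) := by
    rcases lt_or_eq_of_le (infDist_nonneg (x := (0:E)) (s := K α)) with h | h
    · exact h
    · exact absurd (((hKcpt α).isClosed.mem_iff_infDist_zero (hKne α)).2 h.symm) h0
  obtain ⟨p, hpK, hpd⟩ := (hKcpt α).exists_infDist_eq_dist (hKne α) 0
  have hdp : infDist 0 (K α) = ‖p‖ := by rw [hpd, dist_zero_left]
  have hpne : p ≠ 0 := fun h => by rw [hdp, h, norm_zero] at hd; exact lt_irrefl _ hd
  -- the projection inequality
  have hproj : ∀ w ∈ K α, ‖p‖ ^ 2 ≤ ⟪p, w⟫ := by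
    have heq : ‖(0:E) - p‖ = ⨅ w : K α, ‖(0:E) - w‖ := by
      have := infDist_eq_iInf (x := (0:E)) (s := K α)
      rw [hdp] at this
      simpa [dist_eq_norm] using this
    intro w hw
    have := (norm_eq_iInf_iff_real_inner_le_zero (hKconv α) hpK).1 heq w hw
    have h2 : ⟪-p, w - p⟫ ≤ 0 := by simpa using this
    rw [inner_neg_left, inner_sub_right, real_inner_self_eq_norm_sq] at h2
    linarith
  -- Carathéodory with positive weights
  obtain ⟨ι, hι, z, w, hzr, haff, hwpos, hw1, hwz⟩ :=
    eq_pos_convex_span_of_mem_convexHull hpK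
  have hιne : Nonempty ι := by
    by_contra hni
    rw [not_nonempty_iff] at hni
    rw [Finset.univ_eq_empty, Finset.sum_empty] at hw1
    exact one_ne_zero hw1.symm
  have hzK : ∀ i, z i ∈ K α := fun i => subset_convexHull ℝ _ (hzr ⟨i, rfl⟩)
  -- all z i lie on the hyperplane ⟪p, ·⟫ = ‖p‖²
  have hinner : ∀ i, ⟪p, z i⟫ = ‖p‖ ^ 2 := by
    have hsum0 : ∑ i, w i * (⟪p, z i⟫ - ‖p‖ ^ 2) = 0 := by
      have : ⟪p, p⟫ = ∑ i, w i * ⟪p, z i⟫ := by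
        rw [← hwz, inner_sum]; simp [real_inner_smul_right]
      rw [real_inner_self_eq_norm_sq] at this
      have hws : ∑ i, w i * ‖p‖ ^ 2 = ‖p‖ ^ 2 := by
        rw [← Finset.sum_mul, hw1, one_mul]
      simp only [mul_sub]
      rw [Finset.sum_sub_distrib, ← this, hws, sub_self]
    intro i
    have := (Finset.sum_eq_zero_iff_of_nonneg (fun i _ =>
      mul_nonneg (hwpos i).le (sub_nonneg.2 (hproj _ (hzK i))))).1 hsum0 i (Finset.mem_univ i)
    have := (mul_eq_zero.1 this).resolve_left (ne_of_gt (hwpos i))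
    linarith [sub_eq_zero.1 this]
  -- cardinality bound: card ι ≤ N
  have hN1 : 1 ≤ N := by
    haveI := nontrivial_of_ne p 0 hpne
    have := Module.finrank_pos (R := ℝ) (M := E)
    omega
  have hcard : Fintype.card ι ≤ N := by
    set L : E →ₗ[ℝ] ℝ := innerₗ E p with hL
    have hLz : ∀ i, L (z i) = ‖p‖ ^ 2 := fun i => hinner i
    have hker : vectorSpan ℝ (Set.range z) ≤ LinearMap.ker L := by
      rw [vectorSpan_def]
      rw [Submodule.span_le]
      rintro v ⟨x, ⟨i, rfl⟩, y, ⟨i', rfl⟩, rfl⟩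
      simp only [SetLike.mem_coe, LinearMap.mem_ker, vsub_eq_sub, map_sub, hLz, sub_self]
    have hLsurj : Function.Surjective L := by
      intro r
      refine ⟨(r / ‖p‖ ^ 2) • p, ?_⟩
      have hp2 : ‖p‖ ^ 2 ≠ 0 := pow_ne_zero _ (norm_ne_zero_iff.2 hpne)
      have : L p = ‖p‖ ^ 2 := real_inner_self_eq_norm_sq p
      rw [map_smul, this, smul_eq_mul]
      field_simp
    have hrange : finrank ℝ (LinearMap.range L) = 1 := by
      rw [LinearMap.range_eq_top.2 hLsurj, finrank_top, Module.finrank_self]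
    have hkerdim : finrank ℝ (LinearMap.ker L) = N - 1 := by
      have := LinearMap.finrank_range_add_finrank_ker L
      rw [hrange, hdim] at this
      omega
    obtain ⟨m, hm⟩ : ∃ m, Fintype.card ι = m + 1 :=
      ⟨Fintype.card ι - 1, (Nat.succ_pred_eq_of_pos (Fintype.card_pos)).symm⟩
    have hvs := haff.finrank_vectorSpan hm
    have hmono := Submodule.finrank_mono hker
    rw [hvs, hkerdim] at hmono
    omega
  -- choose colors and a free color j₀
  have hcolor : ∀ i, ∃ j : Fin (N + 1), z i = f (α j) j := fun i => by
    obtain ⟨j, hj⟩ := hzr ⟨i, rfl⟩; exact ⟨j, hj.symm⟩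
  choose c hc using hcolor
  have hnsurj : ¬ Function.Surjective c := by
    intro hs
    have := Fintype.card_le_of_surjective c hs
    rw [Fintype.card_fin] at this
    omega
  rw [Function.Surjective] at hnsurj
  push_neg at hnsurj
  obtain ⟨j₀, hj₀⟩ := hnsurj
  -- find a point of color j₀ on the nonpositive side
  have hy : ∃ g₀ : G, ⟪p, f g₀ j₀⟫ ≤ 0 := by
    by_contra hall
    push_neg at hall
    have : 0 < ∑ g : G, ⟪p, f g j₀⟫ :=
      Finset.sum_pos (fun g _ => hall g) Finset.univ_nonempty
    rw [← inner_sum, hsum j₀, inner_zero_right] at this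
    exact lt_irrefl _ this
  obtain ⟨g₀, hg₀⟩ := hy
  set β : Fin (N + 1) → G := Function.update α j₀ g₀ with hβ
  set y : E := f g₀ j₀ with hyd
  have hyβ : y ∈ K β := subset_convexHull ℝ _ ⟨j₀, by
    simp [hβ, Function.update_self, hyd]⟩
  have hpβ : p ∈ K β := by
    rw [← hwz]
    refine (hKconv β).sum_mem (fun i _ => (hwpos i).le) hw1 (fun i _ => ?_)
    refine subset_convexHull ℝ _ ⟨c i, ?_⟩
    have hb : β (c i) = α (c i) := Function.update_of_ne (hj₀ i) _ _
    show f (β (c i)) (c i) = z i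
    rw [hb]
    exact (hc i).symm
  -- find a closer point in K β
  set d := ‖p‖ with hdd
  have hd0 : 0 < d := norm_pos_iff.2 hpne
  set t : ℝ := min 1 (d ^ 2 / (‖y - p‖ ^ 2 + 1)) with ht
  have hyp2 : 0 < ‖y - p‖ ^ 2 + 1 := by positivity
  have ht0 : 0 < t := lt_min one_pos (by positivity)
  have ht1 : t ≤ 1 := min_le_left _ _
  set q : E := p + t • (y - p) with hq
  have hqK : q ∈ K β := by
    have := (hKconv β) hpβ hyβ (by linarith : (0:ℝ) ≤ 1 - t) ht0.le (by ring)
    have heq : (1 - t) • p + t • y = q := by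
      rw [hq, smul_sub]; module
    rwa [heq] at this
  have hpy : ⟪p, y - p⟫ ≤ -d ^ 2 := by
    rw [inner_sub_right, real_inner_self_eq_norm_sq]
    linarith
  have hqnorm : ‖q‖ ^ 2 < d ^ 2 := by
    have hexp : ‖q‖ ^ 2 = d ^ 2 + 2 * ⟪p, t • (y - p)⟫ + ‖t • (y - p)‖ ^ 2 := by
      rw [hq, hdd]
      have := norm_add_sq_real p (t • (y - p))
      linarith
    rw [real_inner_smul_right] at hexp
    have hns : ‖t • (y - p)‖ ^ 2 = t ^ 2 * ‖y - p‖ ^ 2 := by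
      rw [norm_smul, mul_pow, Real.norm_eq_abs, sq_abs]
    have htyp : t * ‖y - p‖ ^ 2 < d ^ 2 := by
      have h1 : t ≤ d ^ 2 / (‖y - p‖ ^ 2 + 1) := min_le_right _ _
      have h2 : t * ‖y - p‖ ^ 2 ≤ d ^ 2 / (‖y - p‖ ^ 2 + 1) * ‖y - p‖ ^ 2 :=
        mul_le_mul_of_nonneg_right h1 (by positivity)
      have h3 : d ^ 2 / (‖y - p‖ ^ 2 + 1) * ‖y - p‖ ^ 2 < d ^ 2 := by
        rw [div_mul_eq_mul_div, div_lt_iff₀ hyp2]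
        nlinarith [sq_nonneg (‖y - p‖)]
      linarith
    have h5 : t * ⟪p, y - p⟫ ≤ t * (-d ^ 2) := mul_le_mul_of_nonneg_left hpy ht0.le
    have h6 : t * (t * ‖y - p‖ ^ 2) < t * d ^ 2 := mul_lt_mul_of_pos_left htyp ht0
    have h7 : t ^ 2 * ‖y - p‖ ^ 2 = t * (t * ‖y - p‖ ^ 2) := by ring
    have h8 : 0 < t * d ^ 2 := by positivity
    rw [hns] at hexp
    have h9 : t * (-d ^ 2) = -(t * d ^ 2) := by ring
    linarith
  have hqd : ‖q‖ < d := lt_of_pow_lt_pow_left₀ 2 hd0.le hqnorm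
  have hcontra : infDist 0 (K β) < infDist 0 (K α) := by
    calc infDist 0 (K β) ≤ dist 0 q := infDist_le_dist_of_mem hqK
    _ = ‖q‖ := by simp
    _ < d := hqd
    _ = infDist 0 (K α) := by rw [hdd]; exact hdp.symm
  exact absurd (hmin β) (not_le.2 hcontra)

/-- Proposition (via Bárány): if `V` is an `N = n(k-1)`-dimensional real representation of a
finite group `G` of order `k` with `V^G = {0}`, then any `G`-equivariant labelling
`φ : G × [N+1] → V` of the vertices of `E_N G` admits a simplex (a choice `α` of one group
element per join coordinate) whose labels capture the origin in their convex hull. -/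
theorem tucker_triple_ENG {G : Type*} [Group G] [Fintype G]
    {V : Type*} [AddCommGroup V] [Module ℝ V] [FiniteDimensional ℝ V]
    (ρ : Representation ℝ G V)
    (k n N : ℕ) (hk : k = Fintype.card G) (hn : 1 ≤ n) (hN : N = n * (k - 1))
    (hdim : Module.finrank ℝ V = N)
    (hfix : ∀ v : V, (∀ g : G, ρ g v = v) → v = 0)
    (φ : G → Fin (N + 1) → V)
    (hequiv : ∀ (g h : G) (j : Fin (N + 1)), φ (g * h) j = ρ g (φ h j)) :
    ∃ α : Fin (N + 1) → G,
      (0 : V) ∈ convexHull ℝ (Set.range (fun j => φ (α j) j)) := by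
  classical
  -- column sums vanish
  have hcolsum : ∀ j : Fin (N + 1), ∑ g : G, φ g j = 0 := by
    intro j
    apply hfix
    intro h
    rw [map_sum]
    calc ∑ g : G, ρ h (φ g j) = ∑ g : G, φ (h * g) j := by
          simp_rw [hequiv]
    _ = ∑ g : G, φ g j := Fintype.sum_equiv (Equiv.mulLeft h) _ _ (fun g => rfl)
  -- transport to Euclidean space
  set e : V ≃ₗ[ℝ] EuclideanSpace ℝ (Fin N) :=
    (finBasisOfFinrankEq ℝ V hdim).equivFun.trans
      (EuclideanSpace.equiv (Fin N) ℝ).symm.toLinearEquiv with he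
  obtain ⟨α, hα⟩ := colorful_capture (finrank_euclideanSpace_fin)
    (fun g j => e (φ g j))
    (fun j => by rw [← map_sum, hcolsum j, map_zero])
  refine ⟨α, ?_⟩
  have himg : (Set.range fun j => e (φ (α j) j)) = e '' Set.range (fun j => φ (α j) j) := by
    rw [← Set.range_comp]; rfl
  have hic := e.toLinearMap.image_convexHull (Set.range (fun j => φ (α j) j))
  simp only [LinearEquiv.coe_coe] at hic
  rw [himg, ← hic] at hα
  obtain ⟨x, hx, hex⟩ := hα
  have hx0 : x = 0 := e.injective (by simpa using hex)
  rwa [hx0] at hx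
end

section
/- Let G be a group of order k and let ◇^n_k ⊂ (W_G)^n be the generalized crosspolytope, with vertex set {u_{g,i} : g ∈ G, i ∈ [n]} where u_{g,i} is the projection of e_g onto W_G placed in the i-th copy. If S is a subset of the vertices of ◇^n_k with 0 ∈ conv(S), then there exists i ∈ [n] such that S contains all of the vertices {u_{g,i} : g ∈ G} of the simplex Δ_{(i)}. -/
variable (G : Type*) [Group G] [Fintype G] [DecidableEq G] (n : ℕ)

/-- Vertex `u_{g,i}` of the generalized crosspolytope: the orthogonal projection of `e_g`
onto the sum-zero hyperplane `W_G`, placed in the `i`-th copy of `W_G ⊂ ℝ[G]`. -/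
noncomputable def crossVertex (g : G) (i : Fin n) : Fin n → G → ℝ :=
  fun i' h => if i' = i then (if h = g then 1 else 0) - 1 / (Fintype.card G : ℝ) else 0

/-- If `S` is a set of vertices of the generalized crosspolytope `◇ⁿ_k` with
`0 ∈ conv(S)`, then `S` contains the full vertex set `{u_{g,i} : g ∈ G}` of one of
the simplices `Δ_{(i)}`. -/
theorem zero_mem_convexHull_vertices_iff_full_simplex
    (S : Set (Fin n → G → ℝ))
    (hS : S ⊆ {x | ∃ (g : G) (i : Fin n), x = crossVertex G n g i})
    (h0 : (0 : Fin n → G → ℝ) ∈ convexHull ℝ S) :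
    ∃ i : Fin n, ∀ g : G, crossVertex G n g i ∈ S := by
  by_contra hcon
  push_neg at hcon
  choose g0 hg0 using hcon
  have hk : (0 : ℝ) < (Fintype.card G : ℝ) := by
    exact_mod_cast Fintype.card_pos
  let φ : (Fin n → G → ℝ) →ₗ[ℝ] ℝ :=
    { toFun := fun x => ∑ i, x i (g0 i)
      map_add' := by intro x y; simp [Finset.sum_add_distrib]
      map_smul' := by intro c x; simp [Finset.mul_sum] }
  have hmem : convexHull ℝ S ⊆ {x | φ x ≤ -(1 / (Fintype.card G : ℝ))} := by
    apply convexHull_min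
    · intro x hx
      obtain ⟨g, i, rfl⟩ := hS hx
      have hne : g0 i ≠ g := by
        rintro rfl; exact hg0 i hx
      have hφ : φ (crossVertex G n g i) = -(1 / (Fintype.card G : ℝ)) := by
        simp only [φ, LinearMap.coe_mk, AddHom.coe_mk, crossVertex]
        rw [Finset.sum_eq_single i]
        · simp [hne]
        · intro b _ hb; simp [hb]
        · simp
      simp [hφ]
    · exact convex_halfSpace_le (LinearMap.isLinear φ) _
  have h1 := hmem h0
  simp only [map_zero, Set.mem_setOf_eq] at h1
  have : (0 : ℝ) < 1 / (Fintype.card G : ℝ) := by positivity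
  linarith
end

section
/- Let p be a prime, n ≥ 1, and let x^i_{rj} (for i ∈ [n], r, j ∈ [p]) be real numbers, with a distinguished index i_0 ∈ [n] and ε > 0, satisfying: (1) |x^i_{rj} − x^i_{r'j}| < ε/(p−1)^2 for all i, j and all r ≠ r'; (2) Σ_{j=1}^p x^i_{rj} = 1 for all i, r; (3) x^{i_0}_{rr} ≤ x^{i_0}_{rj} for all r, j; and (4) x^i_{rj} ≥ x^{i_0}_{rr} for all i, r, j. Then |x^i_{rj} − 1/p| < ε for all i, r, j (assuming p ≥ 2). -/
/-- The arithmetic core of the approximate consensus-`1/p`-division theorem: under the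
closeness, normalization and minimality conditions coming from the Tucker property, all
portions have measure `ε`-close to `1/p`. -/
theorem approx_division_arithmetic (p n : ℕ) (hp : p.Prime) (hn : 1 ≤ n)
    (x : Fin n → Fin p → Fin p → ℝ) (i₀ : Fin n) (ε : ℝ) (hε : 0 < ε)
    (h1 : ∀ (i : Fin n) (j r r' : Fin p), r ≠ r' →
      |x i r j - x i r' j| < ε / ((p : ℝ) - 1) ^ 2)
    (h2 : ∀ (i : Fin n) (r : Fin p), ∑ j, x i r j = 1)
    (h3 : ∀ r j : Fin p, x i₀ r r ≤ x i₀ r j)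
    (h4 : ∀ (i : Fin n) (r j : Fin p), x i₀ r r ≤ x i r j) :
    ∀ (i : Fin n) (r j : Fin p), |x i r j - 1 / (p : ℝ)| < ε := by
  have hp2 : 2 ≤ p := hp.two_le
  have hq2 : (2 : ℝ) ≤ (p : ℝ) := by exact_mod_cast hp2
  have hq0 : (0 : ℝ) < (p : ℝ) := by linarith
  have hq1 : (0 : ℝ) < (p : ℝ) - 1 := by linarith
  have hcard : ∀ r : Fin p, ((Finset.univ.erase r).card : ℝ) = (p : ℝ) - 1 := by
    intro r
    rw [Finset.card_erase_of_mem (Finset.mem_univ r), Finset.card_univ, Fintype.card_fin,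
      Nat.cast_sub (by omega), Nat.cast_one]
  have hne : ∀ r : Fin p, (Finset.univ.erase r).Nonempty := by
    intro r
    rw [← Finset.card_pos, Finset.card_erase_of_mem (Finset.mem_univ r), Finset.card_univ,
      Fintype.card_fin]
    omega
  -- step A: the diagonal entry is at most 1/p
  have hA : ∀ r : Fin p, x i₀ r r ≤ 1 / (p : ℝ) := by
    intro r
    have hsum : (p : ℝ) * x i₀ r r ≤ 1 := by
      calc (p : ℝ) * x i₀ r r = ∑ _j : Fin p, x i₀ r r := by
            simp [Finset.sum_const, mul_comm]
        _ ≤ ∑ j, x i₀ r j := Finset.sum_le_sum fun j _ => h3 r j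
        _ = 1 := h2 i₀ r
    rw [le_div_iff₀ hq0]
    linarith [hsum]
  -- step B
  have hB : ∀ r j : Fin p, r ≠ j → x i₀ r j < 1 / (p : ℝ) + ε / ((p : ℝ) - 1) ^ 2 := by
    intro r j hrj
    have h := h1 i₀ j r j hrj
    rw [abs_lt] at h
    have := hA j
    linarith [h.2]
  -- step C: diagonal entries are > 1/p - ε/(p-1)
  have hC : ∀ r : Fin p, 1 / (p : ℝ) - ε / ((p : ℝ) - 1) < x i₀ r r := by
    intro r
    have hsplit : x i₀ r r + ∑ j ∈ Finset.univ.erase r, x i₀ r j = 1 := by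
      rw [Finset.add_sum_erase _ _ (Finset.mem_univ r)]; exact h2 i₀ r
    have hbound : ∑ j ∈ Finset.univ.erase r, x i₀ r j
        < ∑ _j ∈ Finset.univ.erase r, (1 / (p : ℝ) + ε / ((p : ℝ) - 1) ^ 2) := by
      refine Finset.sum_lt_sum_of_nonempty (hne r) fun j hj => ?_
      exact hB r j (Ne.symm (Finset.ne_of_mem_erase hj))
    rw [Finset.sum_const, nsmul_eq_mul, hcard r] at hbound
    have hkey : ((p : ℝ) - 1) * (1 / (p : ℝ) + ε / ((p : ℝ) - 1) ^ 2)
        = ((p : ℝ) - 1) / (p : ℝ) + ε / ((p : ℝ) - 1) := by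
      field_simp
    rw [hkey] at hbound
    have : ((p : ℝ) - 1) / (p : ℝ) = 1 - 1 / (p : ℝ) := by field_simp
    linarith
  intro i r j
  rw [abs_lt]
  constructor
  · -- lower bound
    have h := h4 i r j
    have hC' := hC r
    have : ε / ((p : ℝ) - 1) ≤ ε := by
      rw [div_le_iff₀ hq1]; nlinarith
    linarith
  · -- upper bound via the sum condition for person i
    have hsplit : x i r j + ∑ j' ∈ Finset.univ.erase j, x i r j' = 1 := by
      rw [Finset.add_sum_erase _ _ (Finset.mem_univ j)]; exact h2 i r
    have hbound : ∑ _j' ∈ Finset.univ.erase j, (1 / (p : ℝ) - ε / ((p : ℝ) - 1))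
        < ∑ j' ∈ Finset.univ.erase j, x i r j' := by
      refine Finset.sum_lt_sum_of_nonempty (hne j) fun j' _ => ?_
      exact lt_of_lt_of_le (hC r) (h4 i r j')
    rw [Finset.sum_const, nsmul_eq_mul, hcard j] at hbound
    have hkey : ((p : ℝ) - 1) * (1 / (p : ℝ) - ε / ((p : ℝ) - 1))
        = 1 - 1 / (p : ℝ) - ε := by
      field_simp
    rw [hkey] at hbound
    linarith
end

section
/- Suppose that for every prime p, every n ≥ 1, and every tuple of continuous probability measures μ_1, …, μ_n on [0,1], there exist n(p−1) cuts of [0,1] and a partition of the resulting intervals into p families F_1,…,F_p with μ_i(∪F_j) = 1/p for all i, j. Then for every integer k ≥ 2 (not necessarily prime), every n ≥ 1, and every tuple of continuous probability measures μ_1,…,μ_n on [0,1], there exist n(k−1) cuts and a partition into k families F_1,…,F_k with μ_i(∪F_j) = 1/k for all i, j. -/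
open MeasureTheory

/-- There exist `n(k-1)` cuts `0 = y_0 ≤ y_1 ≤ ⋯ ≤ 1` of the unit interval together with a
distribution `f` of the `n(k-1)+1` resulting subintervals into `k` families such that each
measure `μ_i` gives each family total mass exactly `1/k`. -/
def EquipartitionExists (k n : ℕ) (μ : Fin n → Measure ℝ) : Prop :=
  ∃ (y : Fin (n * (k - 1) + 2) → ℝ) (f : Fin (n * (k - 1) + 1) → Fin k),
    Monotone y ∧ y 0 = 0 ∧ y (Fin.last _) = 1 ∧
    ∀ (i : Fin n) (j : Fin k),
      μ i (⋃ m : Fin (n * (k - 1) + 1), ⋃ (_ : f m = j),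
        Set.Icc (y m.castSucc) (y m.succ)) = 1 / (k : ENNReal)


open Set Filter Topology
open scoped ENNReal

lemma meas_iUnion_Icc_eq_Ioc (μ : Measure ℝ) (hat : ∀ x : ℝ, μ {x} = 0) {q : ℕ}
    (u v : Fin q → ℝ) (P : Fin q → Prop) :
    μ (⋃ s, ⋃ (_ : P s), Icc (u s) (v s)) = μ (⋃ s, ⋃ (_ : P s), Ioc (u s) (v s)) := by
  apply le_antisymm
  · have hsub : (⋃ s, ⋃ (_ : P s), Icc (u s) (v s)) ⊆
        (⋃ s, ⋃ (_ : P s), Ioc (u s) (v s)) ∪ (⋃ s : Fin q, {u s}) := by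
      rintro x hx
      simp only [mem_iUnion] at hx
      obtain ⟨s, hs, hx⟩ := hx
      rcases eq_or_lt_of_le hx.1 with h | h
      · exact Or.inr (mem_iUnion.2 ⟨s, by simp [← h]⟩)
      · exact Or.inl (mem_iUnion.2 ⟨s, mem_iUnion.2 ⟨hs, ⟨h, hx.2⟩⟩⟩)
    calc μ _ ≤ μ ((⋃ s, ⋃ (_ : P s), Ioc (u s) (v s)) ∪ (⋃ s : Fin q, {u s})) :=
          measure_mono hsub
    _ ≤ μ (⋃ s, ⋃ (_ : P s), Ioc (u s) (v s)) + μ (⋃ s : Fin q, {u s}) :=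
          measure_union_le _ _
    _ = μ (⋃ s, ⋃ (_ : P s), Ioc (u s) (v s)) := by
          rw [measure_iUnion_null fun s => hat (u s), add_zero]
  · exact measure_mono (iUnion_mono fun s => iUnion_mono fun _ => Ioc_subset_Icc_self)

lemma null_of_pair_null (μ : Measure ℝ) [IsFiniteMeasure μ] (hat : ∀ x : ℝ, μ {x} = 0)
    (S : Set ℝ) (hS : S ⊆ Icc 0 1)
    (hnull : ∀ x1 ∈ S, ∀ x2 ∈ S, x1 ≤ x2 → μ (Ioc x1 x2) = 0) : μ S = 0 := by
  classical
  rcases S.eq_empty_or_nonempty with rfl | hne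
  · simp
  have hbdd : BddBelow S := ⟨0, fun x hx => (hS hx).1⟩
  have hbdd' : BddAbove S := ⟨1, fun x hx => (hS hx).2⟩
  set α := sInf S with hα
  set β := sSup S with hβ
  set B : ℚ × ℚ → Set ℝ := fun qq =>
    if (∃ x1 ∈ S, x1 ≤ (qq.1 : ℝ)) ∧ (∃ x2 ∈ S, (qq.2 : ℝ) ≤ x2)
    then Ioc (qq.1 : ℝ) (qq.2 : ℝ) else ∅ with hB
  have hBnull : ∀ qq : ℚ × ℚ, μ (B qq) = 0 := by
    intro qq
    simp only [hB]
    split_ifs with h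
    · obtain ⟨⟨x1, hx1, hx1'⟩, ⟨x2, hx2, hx2'⟩⟩ := h
      rcases le_or_gt x1 x2 with hle | hlt
      · exact measure_mono_null (Ioc_subset_Ioc hx1' hx2') (hnull x1 hx1 x2 hx2 hle)
      · refine measure_mono_null (fun x hx => ?_) (measure_empty (μ := μ))
        exact absurd (hx1'.trans (hx.1.le.trans hx.2)) (not_le.2 (lt_of_le_of_lt hx2' hlt))
    · simp
  have hcover : S ⊆ ({α} ∪ {β}) ∪ ⋃ qq : ℚ × ℚ, B qq := by
    intro x hx
    rcases eq_or_lt_of_le (csInf_le hbdd hx) with h1 | h1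
    · exact Or.inl (Or.inl h1.symm)
    rcases eq_or_lt_of_le (le_csSup hbdd' hx) with h2 | h2
    · exact Or.inl (Or.inr h2)
    obtain ⟨q1, hq1, hq1'⟩ := exists_rat_btwn h1
    obtain ⟨q2, hq2, hq2'⟩ := exists_rat_btwn h2
    obtain ⟨x1, hx1S, hx1⟩ := exists_lt_of_csInf_lt hne hq1
    obtain ⟨x2, hx2S, hx2⟩ := exists_lt_of_lt_csSup hne hq2'
    refine Or.inr (mem_iUnion.2 ⟨(q1, q2), ?_⟩)
    simp only [hB]
    rw [if_pos ⟨⟨x1, hx1S, hx1.le⟩, ⟨x2, hx2S, hx2.le⟩⟩]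
    exact ⟨hq1', hq2.le⟩
  have : μ S ≤ 0 := by
    calc μ S ≤ μ (({α} ∪ {β}) ∪ ⋃ qq : ℚ × ℚ, B qq) := measure_mono hcover
    _ ≤ μ ({α} ∪ {β}) + μ (⋃ qq : ℚ × ℚ, B qq) := measure_union_le _ _
    _ ≤ (μ {α} + μ {β}) + 0 := by
        gcongr
        · exact measure_union_le _ _
        · exact le_of_eq (measure_iUnion_null hBnull)
    _ = 0 := by rw [hat, hat]; simp
  exact le_antisymm this zero_le

noncomputable def hfun (ρ : Measure ℝ) (G : Set ℝ) (x : ℝ) : ℝ :=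
  (ρ (G ∩ Iic x)).toReal / (ρ G).toReal

noncomputable def zfun (ρ : Measure ℝ) (G : Set ℝ) (t : ℝ) : ℝ :=
  sInf {x | x ∈ Icc (0:ℝ) 1 ∧ t ≤ hfun ρ G x}

section Transport

variable {ρ : Measure ℝ} [IsFiniteMeasure ρ] {G : Set ℝ}

lemma Cpos (hG0 : ρ G ≠ 0) : 0 < (ρ G).toReal :=
  ENNReal.toReal_pos hG0 (measure_ne_top ρ G)

lemma hfun_mono (hG0 : ρ G ≠ 0) : Monotone (hfun ρ G) := by
  intro x y hxy
  have h1 : (ρ (G ∩ Iic x)).toReal ≤ (ρ (G ∩ Iic y)).toReal :=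
    ENNReal.toReal_mono (measure_ne_top _ _)
      (measure_mono (inter_subset_inter_right _ (Iic_subset_Iic.2 hxy)))
  unfold hfun
  gcongr

lemma hfun_nonneg (x : ℝ) : 0 ≤ hfun ρ G x := by
  unfold hfun; positivity

lemma hfun_le_one (hG0 : ρ G ≠ 0) (x : ℝ) : hfun ρ G x ≤ 1 := by
  rw [hfun, div_le_one (Cpos hG0)]
  exact ENNReal.toReal_mono (measure_ne_top _ _) (measure_mono inter_subset_left)

lemma hfun_nonpos (hG01 : G ⊆ Ioc 0 1) {x : ℝ} (hx : x ≤ 0) : hfun ρ G x = 0 := by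
  have : G ∩ Iic x = ∅ := by
    apply eq_empty_of_forall_notMem
    intro y hy
    exact absurd (hy.2.trans hx) (not_le.2 (hG01 hy.1).1)
  rw [hfun, this]
  simp

lemma hfun_one (hG01 : G ⊆ Ioc 0 1) (hG0 : ρ G ≠ 0) {x : ℝ} (hx : (1:ℝ) ≤ x) :
    hfun ρ G x = 1 := by
  have : G ∩ Iic x = G := inter_eq_left.2 (fun y hy => le_trans (hG01 hy).2 hx)
  rw [hfun, this, div_self (Cpos hG0).ne']

lemma hfun_Ioc (hGm : MeasurableSet G) (hG0 : ρ G ≠ 0) {u v : ℝ} (huv : u ≤ v) :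
    (ρ (G ∩ Ioc u v)).toReal = (hfun ρ G v - hfun ρ G u) * (ρ G).toReal := by
  have hC := Cpos hG0
  have hsplit : G ∩ Iic v = (G ∩ Iic u) ∪ (G ∩ Ioc u v) := by
    rw [← inter_union_distrib_left, Iic_union_Ioc_eq_Iic huv]
  have hdisj : Disjoint (G ∩ Iic u) (G ∩ Ioc u v) := by
    refine Disjoint.mono inter_subset_right inter_subset_right ?_
    exact Iic_disjoint_Ioc le_rfl
  have h1 : (ρ (G ∩ Iic v)).toReal = (ρ (G ∩ Iic u)).toReal + (ρ (G ∩ Ioc u v)).toReal := by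
    rw [hsplit, measure_union hdisj (hGm.inter measurableSet_Ioc),
      ENNReal.toReal_add (measure_ne_top _ _) (measure_ne_top _ _)]
  have h2 : hfun ρ G v * (ρ G).toReal = (ρ (G ∩ Iic v)).toReal := div_mul_cancel₀ _ hC.ne'
  have h3 : hfun ρ G u * (ρ G).toReal = (ρ (G ∩ Iic u)).toReal := div_mul_cancel₀ _ hC.ne'
  nlinarith [h1, h2, h3]

lemma ioc_null (hGm : MeasurableSet G) (hG0 : ρ G ≠ 0) {u v : ℝ} (huv : u ≤ v)
    (heq : hfun ρ G u = hfun ρ G v) : ρ (G ∩ Ioc u v) = 0 := by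
  have h := hfun_Ioc hGm hG0 huv
  rw [heq, sub_self, zero_mul] at h
  rcases (ENNReal.toReal_eq_zero_iff _).1 h with h' | h'
  · exact h'
  · exact absurd h' (measure_ne_top _ _)

lemma zfun_set_nonempty (hG01 : G ⊆ Ioc 0 1) (hG0 : ρ G ≠ 0) {t : ℝ} (ht : t ∈ Icc (0:ℝ) 1) :
    {x | x ∈ Icc (0:ℝ) 1 ∧ t ≤ hfun ρ G x}.Nonempty :=
  ⟨1, ⟨by norm_num, ht.2.trans_eq (hfun_one hG01 hG0 le_rfl).symm⟩⟩

lemma zfun_set_bddBelow : BddBelow {x | x ∈ Icc (0:ℝ) 1 ∧ t ≤ hfun ρ G x} :=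
  ⟨0, fun x hx => hx.1.1⟩

lemma zfun_mem (hG01 : G ⊆ Ioc 0 1) (hG0 : ρ G ≠ 0) {t : ℝ} (ht : t ∈ Icc (0:ℝ) 1) :
    zfun ρ G t ∈ Icc (0:ℝ) 1 := by
  constructor
  · exact le_csInf (zfun_set_nonempty hG01 hG0 ht) (fun x hx => hx.1.1)
  · exact csInf_le zfun_set_bddBelow ⟨by norm_num, ht.2.trans_eq (hfun_one hG01 hG0 le_rfl).symm⟩

lemma zfun_mono (hG01 : G ⊆ Ioc 0 1) (hG0 : ρ G ≠ 0) {t1 t2 : ℝ} (ht2 : t2 ∈ Icc (0:ℝ) 1)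
    (h12 : t1 ≤ t2) : zfun ρ G t1 ≤ zfun ρ G t2 :=
  csInf_le_csInf zfun_set_bddBelow (zfun_set_nonempty hG01 hG0 ht2)
    (fun x hx => ⟨hx.1, h12.trans hx.2⟩)

lemma zfun_zero (hG01 : G ⊆ Ioc 0 1) : zfun ρ G 0 = 0 := by
  have : {x | x ∈ Icc (0:ℝ) 1 ∧ (0:ℝ) ≤ hfun ρ G x} = Icc 0 1 := by
    ext x; simp only [mem_setOf_eq, mem_Icc, and_iff_left_iff_imp]
    exact fun _ => hfun_nonneg x
  rw [zfun, this, csInf_Icc zero_le_one]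

lemma hfun_lt_of_lt_zfun (hG01 : G ⊆ Ioc 0 1) (hG0 : ρ G ≠ 0) {t : ℝ} (ht : t ∈ Icc (0:ℝ) 1) {x : ℝ}
    (hx : x < zfun ρ G t) : hfun ρ G x ≤ t := by
  rcases le_or_gt x 0 with h0 | h0
  · rw [hfun_nonpos hG01 h0]; exact ht.1
  · by_contra hcon
    push_neg at hcon
    have hx1 : x ≤ 1 := hx.le.trans (zfun_mem hG01 hG0 ht).2
    have hxS : x ∈ {x | x ∈ Icc (0:ℝ) 1 ∧ t ≤ hfun ρ G x} := ⟨⟨h0.le, hx1⟩, hcon.le⟩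
    exact absurd (csInf_le zfun_set_bddBelow hxS) (not_le.2 hx)


lemma hfun_zfun (hGm : MeasurableSet G) (hG01 : G ⊆ Ioc 0 1) (hG0 : ρ G ≠ 0)
    (hatom : ∀ x : ℝ, ρ {x} = 0) {t : ℝ} (ht : t ∈ Icc (0:ℝ) 1) :
    hfun ρ G (zfun ρ G t) = t := by
  set z := zfun ρ G t with hz
  set C := (ρ G).toReal with hCdef
  have hC : 0 < C := Cpos hG0
  apply le_antisymm
  · -- hfun z ≤ t
    have hsea : ρ (G ∩ Iic z) = ρ (G ∩ Iio z) := by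
      have : G ∩ Iic z = (G ∩ Iio z) ∪ (G ∩ {z}) := by
        rw [← inter_union_distrib_left, Iio_union_right]
      rw [this]
      refine le_antisymm ((measure_union_le _ _).trans ?_) (measure_mono subset_union_left)
      have : ρ (G ∩ {z}) = 0 :=
        measure_mono_null inter_subset_right (hatom z)
      rw [this, add_zero]
    have hIio : G ∩ Iio z = ⋃ nn : ℕ, G ∩ Iic (z - 1/(nn+1)) := by
      ext x
      simp only [mem_inter_iff, mem_iUnion, mem_Iio, mem_Iic]
      constructor
      · rintro ⟨hxG, hxz⟩
        obtain ⟨nn, hn⟩ := exists_nat_one_div_lt (show (0:ℝ) < z - x by linarith)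
        exact ⟨nn, hxG, by push_cast at hn ⊢; linarith⟩
      · rintro ⟨nn, hxG, hxn⟩
        have : (0:ℝ) < 1/(nn+1) := by positivity
        exact ⟨hxG, by linarith⟩
    have hmono : Monotone (fun nn : ℕ => G ∩ Iic (z - 1/(nn+1))) := by
      intro n1 n2 h12
      apply inter_subset_inter_right
      apply Iic_subset_Iic.2
      have h1 : (1:ℝ)/(n2+1) ≤ 1/(n1+1) := by
        apply one_div_le_one_div_of_le (by positivity)
        push_cast; linarith [(Nat.cast_le (α := ℝ)).2 h12]
      linarith
    have hlim : Tendsto (fun nn : ℕ => ρ (G ∩ Iic (z - 1/(nn+1)))) atTop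
        (𝓝 (ρ (G ∩ Iio z))) := by
      rw [hIio]
      exact tendsto_measure_iUnion_atTop hmono
    have hbound : ∀ nn : ℕ, ρ (G ∩ Iic (z - 1/(nn+1))) ≤ ENNReal.ofReal (t * C) := by
      intro nn
      have hlt : z - 1/(nn+1) < z := by
        have : (0:ℝ) < 1/(nn+1) := by positivity
        linarith
      have h1 : hfun ρ G (z - 1/(nn+1)) ≤ t := hfun_lt_of_lt_zfun hG01 hG0 ht hlt
      have h2 : (ρ (G ∩ Iic (z - 1/(nn+1)))).toReal ≤ t * C := by
        have := (div_le_iff₀ hC).1 h1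
        exact this
      exact ENNReal.le_ofReal_iff_toReal_le (measure_ne_top _ _)
        (by nlinarith [ht.1]) |>.2 h2
    have hfin : ρ (G ∩ Iio z) ≤ ENNReal.ofReal (t * C) :=
      le_of_tendsto hlim (Eventually.of_forall hbound)
    rw [hz] at hsea
    have h3 : (ρ (G ∩ Iic (zfun ρ G t))).toReal ≤ t * C := by
      rw [hsea]
      calc (ρ (G ∩ Iio (zfun ρ G t))).toReal
          ≤ (ENNReal.ofReal (t * C)).toReal := ENNReal.toReal_mono ENNReal.ofReal_ne_top hfin
        _ = t * C := ENNReal.toReal_ofReal (by nlinarith [ht.1])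
    rw [hfun, ← hCdef, div_le_iff₀ hC]
    exact h3
  · -- t ≤ hfun z
    have hterm : ∀ nn : ℕ, t ≤ hfun ρ G (z + 1/(nn+1)) := by
      intro nn
      have hlt : z < z + 1/(nn+1) := by
        have : (0:ℝ) < 1/(nn+1) := by positivity
        linarith
      obtain ⟨x, hxS, hxlt⟩ := exists_lt_of_csInf_lt (zfun_set_nonempty hG01 hG0 ht) hlt
      exact hxS.2.trans (hfun_mono hG0 hxlt.le)
    have hIic : (⋂ nn : ℕ, G ∩ Iic (z + 1/(nn+1))) = G ∩ Iic z := by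
      ext x
      simp only [mem_iInter, mem_inter_iff, mem_Iic]
      constructor
      · intro hx
        refine ⟨(hx 0).1, ?_⟩
        by_contra hcon
        push_neg at hcon
        obtain ⟨nn, hn⟩ := exists_nat_one_div_lt (show (0:ℝ) < x - z by linarith)
        have := (hx nn).2
        push_cast at hn
        linarith
      · intro hx nn
        have : (0:ℝ) < 1/(nn+1) := by positivity
        exact ⟨hx.1, by linarith [hx.2]⟩
    have hanti : Antitone (fun nn : ℕ => G ∩ Iic (z + 1/(nn+1))) := by
      intro n1 n2 h12
      apply inter_subset_inter_right
      apply Iic_subset_Iic.2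
      have h1 : (1:ℝ)/(n2+1) ≤ 1/(n1+1) := by
        apply one_div_le_one_div_of_le (by positivity)
        push_cast; linarith [(Nat.cast_le (α := ℝ)).2 h12]
      linarith
    have hlim : Tendsto (fun nn : ℕ => ρ (G ∩ Iic (z + 1/(nn+1)))) atTop
        (𝓝 (ρ (G ∩ Iic z))) := by
      rw [← hIic]
      exact tendsto_measure_iInter_atTop
        (fun nn => (hGm.inter measurableSet_Iic).nullMeasurableSet) hanti
        ⟨0, measure_ne_top _ _⟩
    have hbound : ∀ nn : ℕ, ENNReal.ofReal (t * C) ≤ ρ (G ∩ Iic (z + 1/(nn+1))) := by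
      intro nn
      have h1 := hterm nn
      have h2 : t * C ≤ (ρ (G ∩ Iic (z + 1/(nn+1)))).toReal := by
        have := (le_div_iff₀ hC).1 h1
        exact this
      exact ENNReal.ofReal_le_of_le_toReal h2
    have hfin : ENNReal.ofReal (t * C) ≤ ρ (G ∩ Iic z) :=
      ge_of_tendsto hlim (Eventually.of_forall hbound)
    have h3 : t * C ≤ (ρ (G ∩ Iic z)).toReal := by
      calc t * C = (ENNReal.ofReal (t * C)).toReal :=
            (ENNReal.toReal_ofReal (by nlinarith [ht.1])).symm
        _ ≤ (ρ (G ∩ Iic z)).toReal := ENNReal.toReal_mono (measure_ne_top _ _) hfin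
    rw [hfun, ← hCdef, le_div_iff₀ hC]
    exact h3

lemma null_of_pair_null' (μ : Measure ℝ) [IsFiniteMeasure μ] (hat : ∀ x : ℝ, μ {x} = 0)
    (S : Set ℝ) (hS : S ⊆ Icc 0 1)
    (hnull : ∀ x1 ∈ S, ∀ x2 ∈ S, x1 ≤ x2 → μ (Ioc x1 x2) = 0) : μ S = 0 :=
  null_of_pair_null μ hat S hS hnull

lemma transport_null (hGm : MeasurableSet G) (hG01 : G ⊆ Ioc 0 1) (hG0 : ρ G ≠ 0)
    (μ' : Measure ℝ) [IsFiniteMeasure μ'] (hμatom : ∀ x : ℝ, μ' {x} = 0)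
    (hle : ∀ s : Set ℝ, μ' s ≤ ρ s)
    (S : Set ℝ) (hconst : ∀ x1 ∈ S, ∀ x2 ∈ S, x1 ≤ x2 → hfun ρ G x1 = hfun ρ G x2) :
    μ' (G ∩ S) = 0 := by
  have hres : ∀ x : ℝ, (μ'.restrict G) {x} = 0 := by
    intro x
    rw [Measure.restrict_apply' hGm]
    exact le_antisymm ((measure_mono inter_subset_left).trans (hμatom x).le) zero_le
  haveI : IsFiniteMeasure (μ'.restrict G) := inferInstance
  have key : (μ'.restrict G) (S ∩ Icc 0 1) = 0 := by
    apply null_of_pair_null _ hres _ inter_subset_right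
    intro x1 hx1 x2 hx2 h12
    rw [Measure.restrict_apply' hGm]
    refine le_antisymm (le_trans (hle _) ?_) zero_le
    rw [inter_comm]
    exact (ioc_null hGm hG0 h12 (hconst x1 hx1.1 x2 hx2.1 h12)).le
  have hset : G ∩ S = (S ∩ Icc 0 1) ∩ G := by
    ext x
    constructor
    · rintro ⟨hxG, hxS⟩
      exact ⟨⟨hxS, Ioc_subset_Icc_self (hG01 hxG)⟩, hxG⟩
    · rintro ⟨⟨hxS, _⟩, hxG⟩
      exact ⟨hxG, hxS⟩
  rw [hset, ← Measure.restrict_apply' hGm, key]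

lemma transport_Iic (hGm : MeasurableSet G) (hG01 : G ⊆ Ioc 0 1) (hG0 : ρ G ≠ 0)
    (hatom : ∀ x : ℝ, ρ {x} = 0)
    (μ' : Measure ℝ) [IsFiniteMeasure μ'] (hμatom : ∀ x : ℝ, μ' {x} = 0)
    (hle : ∀ s : Set ℝ, μ' s ≤ ρ s) {t : ℝ} (ht : t ∈ Icc (0:ℝ) 1) :
    μ' (G ∩ hfun ρ G ⁻¹' Iic t) = μ' (G ∩ Iic (zfun ρ G t)) := by
  have hzf := hfun_zfun hGm hG01 hG0 hatom ht
  apply le_antisymm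
  · have hsub : G ∩ hfun ρ G ⁻¹' Iic t ⊆
        (G ∩ Iic (zfun ρ G t)) ∪ (G ∩ {x | zfun ρ G t < x ∧ hfun ρ G x ≤ t}) := by
      rintro x ⟨hxG, hxp⟩
      rcases le_or_gt x (zfun ρ G t) with h | h
      · exact Or.inl ⟨hxG, h⟩
      · exact Or.inr ⟨hxG, h, hxp⟩
    calc μ' (G ∩ hfun ρ G ⁻¹' Iic t) ≤ _ := measure_mono hsub
      _ ≤ μ' (G ∩ Iic (zfun ρ G t)) + μ' (G ∩ {x | zfun ρ G t < x ∧ hfun ρ G x ≤ t}) :=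
          measure_union_le _ _
      _ = μ' (G ∩ Iic (zfun ρ G t)) := by
          have h0 : μ' (G ∩ {x | zfun ρ G t < x ∧ hfun ρ G x ≤ t}) = 0 := by
            apply transport_null hGm hG01 hG0 μ' hμatom hle
            intro x1 hx1 x2 hx2 h12
            have e1 : hfun ρ G x1 = t :=
              le_antisymm hx1.2 (hzf ▸ hfun_mono hG0 hx1.1.le)
            have e2 : hfun ρ G x2 = t :=
              le_antisymm hx2.2 (hzf ▸ hfun_mono hG0 hx2.1.le)
            rw [e1, e2]
          rw [h0, add_zero]
  · apply measure_mono
    apply inter_subset_inter_right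
    intro x hx
    simp only [mem_preimage, mem_Iic] at *
    exact (hfun_mono hG0 hx).trans_eq hzf

lemma transport_atom (hGm : MeasurableSet G) (hG01 : G ⊆ Ioc 0 1) (hG0 : ρ G ≠ 0)
    (μ' : Measure ℝ) [IsFiniteMeasure μ'] (hμatom : ∀ x : ℝ, μ' {x} = 0)
    (hle : ∀ s : Set ℝ, μ' s ≤ ρ s) (τ : ℝ) :
    μ' (G ∩ hfun ρ G ⁻¹' {τ}) = 0 := by
  apply transport_null hGm hG01 hG0 μ' hμatom hle
  intro x1 hx1 x2 hx2 _
  rw [mem_preimage, mem_singleton_iff] at hx1 hx2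
  rw [hx1, hx2]


end Transport

lemma pieces_disjoint {P : ℕ} {y : Fin (P+1) → ℝ} (hy : Monotone y) {s s' : Fin P}
    (hss : s ≠ s') :
    Disjoint (Ioc (y s.castSucc) (y s.succ)) (Ioc (y s'.castSucc) (y s'.succ)) := by
  wlog h : s < s' generalizing s s'
  · exact (this hss.symm ((Ne.lt_or_gt hss).resolve_left h)).symm
  apply Set.disjoint_left.2
  rintro x ⟨_, hx2⟩ ⟨hx3, _⟩
  have hle : s.succ ≤ s'.castSucc := by
    rw [Fin.le_def, Fin.val_succ, Fin.coe_castSucc]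
    exact Fin.lt_def.1 h
  have : y s.succ ≤ y s'.castSucc := hy hle
  linarith

lemma exists_piece {P : ℕ} {y : Fin (P+1) → ℝ} (hy : Monotone y) {x : ℝ}
    (hx : x ∈ Ioc (y 0) (y (Fin.last P))) :
    ∃ q : Fin P, x ∈ Ioc (y q.castSucc) (y q.succ) := by
  classical
  set F := Finset.univ.filter (fun s : Fin (P+1) => y s < x) with hF
  have h0F : (0 : Fin (P+1)) ∈ F := by simp [hF]; exact hx.1
  have hFne : F.Nonempty := ⟨0, h0F⟩
  set q1 := F.max' hFne with hq1
  have hq1F : q1 ∈ F := F.max'_mem hFne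
  have hq1lt : y q1 < x := by
    have := hq1F; rw [hF, Finset.mem_filter] at this; exact this.2
  have hq1ne : q1 ≠ Fin.last P := by
    rintro h
    rw [h] at hq1lt
    exact absurd hx.2 (not_le.2 hq1lt)
  have hval : q1.val < P := by
    have := q1.isLt
    rcases Nat.lt_succ_iff_lt_or_eq.1 this with h | h
    · exact h
    · exact absurd (Fin.ext h) hq1ne
  have e1 : (⟨q1.val, hval⟩ : Fin P).castSucc = q1 := Fin.ext rfl
  refine ⟨⟨q1.val, hval⟩, ?_, ?_⟩
  · rw [e1]; exact hq1lt
  · by_contra hcon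
    push_neg at hcon
    have hsF : (⟨q1.val, hval⟩ : Fin P).succ ∈ F := by
      rw [hF, Finset.mem_filter]
      exact ⟨Finset.mem_univ _, hcon⟩
    have h2 := F.le_max' _ hsF
    rw [← hq1, Fin.le_def, Fin.val_succ] at h2
    simp only [Fin.val_mk] at h2
    omega

lemma bracket_unique {P : ℕ} {w : Fin (P+1) → ℝ} (hw : Monotone w) {u v : ℝ}
    (huv : u < v) {r r' : Fin P}
    (h : w r.castSucc ≤ u ∧ v ≤ w r.succ) (h' : w r'.castSucc ≤ u ∧ v ≤ w r'.succ) :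
    r = r' := by
  by_contra hne
  wlog hlt : r < r' generalizing r r'
  · exact this h' h (Ne.symm hne) ((Ne.lt_or_gt hne).resolve_left hlt)
  have hle : r.succ ≤ r'.castSucc := by
    rw [Fin.le_def, Fin.val_succ, Fin.coe_castSucc]
    exact Fin.lt_def.1 hlt
  have := hw hle
  linarith [h.2, h'.1]

lemma bracket_exists {N P : ℕ} {y' : Fin (N+1) → ℝ} (hy' : Monotone y')
    {w : Fin (P+1) → ℝ} {q : Fin N}
    (huv : y' q.castSucc < y' q.succ)
    (h0 : w 0 ≤ y' q.castSucc) (hl : y' q.succ ≤ w (Fin.last P))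
    (hrange : ∀ r : Fin (P+1), ∃ s, y' s = w r) :
    ∃ r : Fin P, w r.castSucc ≤ y' q.castSucc ∧ y' q.succ ≤ w r.succ := by
  classical
  set F := Finset.univ.filter (fun r : Fin (P+1) => w r ≤ y' q.castSucc) with hF
  have h0F : (0:Fin (P+1)) ∈ F := by
    rw [hF, Finset.mem_filter]; exact ⟨Finset.mem_univ _, h0⟩
  have hFne : F.Nonempty := ⟨0, h0F⟩
  set r1 := F.max' hFne with hr1
  have hr1F : r1 ∈ F := F.max'_mem hFne
  have hr1le : w r1 ≤ y' q.castSucc := by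
    have := hr1F; rw [hF, Finset.mem_filter] at this; exact this.2
  have hr1ne : r1 ≠ Fin.last P := by
    rintro h
    rw [h] at hr1le
    linarith
  have hval : r1.val < P := by
    rcases Nat.lt_succ_iff_lt_or_eq.1 r1.isLt with h | h
    · exact h
    · exact absurd (Fin.ext h) hr1ne
  have e1 : (⟨r1.val, hval⟩ : Fin P).castSucc = r1 := Fin.ext rfl
  refine ⟨⟨r1.val, hval⟩, by rw [e1]; exact hr1le, ?_⟩
  have hnotF : (⟨r1.val, hval⟩ : Fin P).succ ∉ F := by
    intro hmem
    have h2 := F.le_max' _ hmem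
    rw [← hr1, Fin.le_def, Fin.val_succ] at h2
    simp only [Fin.val_mk] at h2
    omega
  have hwgt : y' q.castSucc < w (⟨r1.val, hval⟩ : Fin P).succ := by
    by_contra hcon
    push_neg at hcon
    exact hnotF (by rw [hF, Finset.mem_filter]; exact ⟨Finset.mem_univ _, hcon⟩)
  obtain ⟨s, hs⟩ := hrange (⟨r1.val, hval⟩ : Fin P).succ
  have hslt : q.castSucc < s := by
    by_contra hcon
    push_neg at hcon
    have := hy' hcon
    rw [hs] at this
    linarith
  have hsle : q.succ ≤ s := by
    rw [Fin.le_def, Fin.val_succ]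
    have := Fin.lt_def.1 hslt
    rw [Fin.coe_castSucc] at this
    omega
  calc y' q.succ ≤ y' s := hy' hsle
    _ = w _ := hs


open MeasureTheory Set Filter Topology in
lemma step_composite (p m n : ℕ) (hp : 2 ≤ p) (hm : 2 ≤ m) (hn : 1 ≤ n)
    (μ : Fin n → Measure ℝ)
    (hprob : ∀ i, IsProbabilityMeasure (μ i)) (hIcc : ∀ i, μ i (Set.Icc (0:ℝ) 1) = 1)
    (hat : ∀ (i : Fin n) (x : ℝ), μ i {x} = 0)
    (Hp : EquipartitionExists p n μ)
    (Hm : ∀ ν : Fin n → Measure ℝ, (∀ i, IsProbabilityMeasure (ν i)) →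
      (∀ i, ν i (Set.Icc (0:ℝ) 1) = 1) → (∀ (i : Fin n) (x : ℝ), ν i {x} = 0) →
      EquipartitionExists m n ν) :
    EquipartitionExists (p * m) n μ := by
  classical
  have hp0 : (p : ℝ≥0∞) ≠ 0 := Nat.cast_ne_zero.2 (by omega)
  have hpT : (p : ℝ≥0∞) ≠ ⊤ := ENNReal.natCast_ne_top p
  obtain ⟨y, f, hymono, hy0, hylast, hyM⟩ := Hp
  have hy01 : ∀ s, y s ∈ Icc (0:ℝ) 1 := fun s =>
    ⟨hy0 ▸ hymono (Fin.zero_le s), hylast ▸ hymono (Fin.le_last s)⟩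
  set G : Fin p → Set ℝ := fun j => ⋃ s : Fin (n*(p-1)+1), ⋃ (_ : f s = j),
    Ioc (y s.castSucc) (y s.succ) with hGdef
  have hGmeas : ∀ j, MeasurableSet (G j) :=
    fun j => MeasurableSet.iUnion fun s => MeasurableSet.iUnion fun _ => measurableSet_Ioc
  have hG01 : ∀ j, G j ⊆ Ioc 0 1 := by
    intro j x hx
    simp only [hGdef] at hx
    simp only [mem_iUnion] at hx
    obtain ⟨s, _, hx⟩ := hx
    exact ⟨lt_of_le_of_lt (hy0 ▸ (hy01 s.castSucc).1) hx.1,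
      hx.2.trans (hy01 s.succ).2⟩
  have hGμ : ∀ i j, μ i (G j) = 1 / (p : ℝ≥0∞) := by
    intro i j
    simp only [hGdef]
    rw [← meas_iUnion_Icc_eq_Ioc (μ i) (hat i)]
    exact hyM i j
  set ρ : Measure ℝ := ∑ i : Fin n, μ i with hρdef
  have hρapp : ∀ s : Set ℝ, ρ s = ∑ i : Fin n, μ i s := by
    intro s
    rw [hρdef]
    exact Measure.finset_sum_apply _ _ _
  haveI : IsFiniteMeasure ρ := by
    constructor
    rw [hρapp]
    haveI := fun i => hprob i
    simp [measure_univ]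
  have hρatom : ∀ x : ℝ, ρ {x} = 0 := by
    intro x
    rw [hρapp]
    simp [hat]
  have hρle : ∀ (i : Fin n) (s : Set ℝ), μ i s ≤ ρ s := by
    intro i s
    rw [hρapp]
    exact Finset.single_le_sum (f := fun i => μ i s) (fun _ _ => zero_le) (Finset.mem_univ i)
  have hρG0 : ∀ j, ρ (G j) ≠ 0 := by
    intro j
    have h1 : (1 : ℝ≥0∞) / p ≠ 0 := by
      rw [one_div]
      exact ENNReal.inv_ne_zero.2 hpT
    have h2 : μ ⟨0, hn⟩ (G j) ≤ ρ (G j) := hρle _ _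
    rw [hGμ ⟨0, hn⟩ j] at h2
    exact fun h => h1 (le_antisymm (h ▸ h2) zero_le)
  have hhmono : ∀ j, Monotone (hfun ρ (G j)) := fun j => hfun_mono (hρG0 j)
  have hhmeas : ∀ j, Measurable (hfun ρ (G j)) := fun j => (hhmono j).measurable
  set ν : Fin p → Fin n → Measure ℝ := fun j i =>
    Measure.map (hfun ρ (G j)) ((p : ℝ≥0∞) • (μ i).restrict (G j)) with hνdef
  have hνapp : ∀ j i (s : Set ℝ), MeasurableSet s →
      ν j i s = p * μ i (G j ∩ hfun ρ (G j) ⁻¹' s) := by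
    intro j i s hs
    haveI := hprob i
    simp only [hνdef]
    rw [Measure.map_apply (hhmeas j) hs, Measure.smul_apply, smul_eq_mul,
      Measure.restrict_apply ((hhmeas j) hs), inter_comm]
  have hν_univ : ∀ j i, ν j i univ = 1 := by
    intro j i
    rw [hνapp j i univ MeasurableSet.univ]
    simp only [preimage_univ, inter_univ]
    rw [hGμ i j, one_div, ENNReal.mul_inv_cancel hp0 hpT]
  have hν_prob : ∀ j i, IsProbabilityMeasure (ν j i) := fun j i => ⟨hν_univ j i⟩
  have hν_Icc : ∀ j i, ν j i (Icc 0 1) = 1 := by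
    intro j i
    have hpre : hfun ρ (G j) ⁻¹' (Icc 0 1) = univ := by
      ext x
      simp only [mem_preimage, mem_Icc, mem_univ, iff_true]
      exact ⟨hfun_nonneg x, hfun_le_one (hρG0 j) x⟩
    rw [hνapp j i _ measurableSet_Icc, hpre]
    simp only [inter_univ]
    rw [hGμ i j, one_div, ENNReal.mul_inv_cancel hp0 hpT]
  have hν_atom : ∀ j i (x : ℝ), ν j i {x} = 0 := by
    intro j i x
    haveI := hprob i
    rw [hνapp j i _ (measurableSet_singleton x)]
    rw [transport_atom (hGmeas j) (hG01 j) (hρG0 j) (μ i) (hat i) (hρle i) x]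
    simp
  -- inner equipartitions
  have Hinner : ∀ j : Fin p, ∃ (t : Fin (n*(m-1)+2) → ℝ) (g : Fin (n*(m-1)+1) → Fin m),
      Monotone t ∧ t 0 = 0 ∧ t (Fin.last _) = 1 ∧
      ∀ (i : Fin n) (c : Fin m), ν j i (⋃ r : Fin (n*(m-1)+1), ⋃ (_ : g r = c),
        Icc (t r.castSucc) (t r.succ)) = 1 / (m : ENNReal) :=
    fun j => Hm (ν j) (hν_prob j) (hν_Icc j) (hν_atom j)
  choose t g htmono ht0 htlast htM using Hinner
  have ht01 : ∀ j r, t j r ∈ Icc (0:ℝ) 1 := fun j r =>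
    ⟨ht0 j ▸ htmono j (Fin.zero_le r), htlast j ▸ htmono j (Fin.le_last r)⟩
  set Z : Fin p → Fin (n*(m-1)+2) → ℝ := fun j r =>
    if r = Fin.last (n*(m-1)+1) then 1 else zfun ρ (G j) (t j r) with hZdef
  have hZ01 : ∀ j r, Z j r ∈ Icc (0:ℝ) 1 := by
    intro j r
    simp only [hZdef]
    split_ifs with h
    · exact ⟨zero_le_one, le_refl 1⟩
    · exact zfun_mem (hG01 j) (hρG0 j) (ht01 j r)
  have hZmono : ∀ j, Monotone (Z j) := by
    intro j r1 r2 h12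
    simp only [hZdef]
    split_ifs with h1 h2 h2
    · exact le_refl 1
    · exact absurd (Fin.last_le_iff.1 (h1 ▸ h12)) h2
    · exact (zfun_mem (hG01 j) (hρG0 j) (ht01 j r1)).2
    · exact zfun_mono (hG01 j) (hρG0 j) (ht01 j r2) (htmono j h12)
  have hZ0 : ∀ j, Z j 0 = 0 := by
    intro j
    have h0 : (0 : Fin (n*(m-1)+2)) ≠ Fin.last (n*(m-1)+1) := by
      intro h
      have := congrArg Fin.val h
      simp [Fin.last] at this
    simp only [hZdef]
    rw [if_neg h0, ht0 j, zfun_zero (hG01 j)]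
  have hZlast : ∀ j, Z j (Fin.last _) = 1 := by
    intro j
    simp [hZdef]
  -- key transport identities
  have hIic : ∀ j i (r : Fin (n*(m-1)+2)),
      (p : ℝ≥0∞) * μ i (G j ∩ Iic (Z j r)) = ν j i (Iic (t j r)) := by
    intro j i r
    by_cases hr : r = Fin.last (n*(m-1)+1)
    · subst hr
      rw [hZlast j, htlast j]
      have h1 : G j ∩ Iic 1 = G j := inter_eq_left.2 (fun x hx => (hG01 j hx).2.trans (le_refl 1))
      rw [h1, hGμ i j, one_div, ENNReal.mul_inv_cancel hp0 hpT]
      haveI := hν_prob j i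
      refine (le_antisymm prob_le_one ?_).symm
      calc (1:ℝ≥0∞) = ν j i (Icc 0 1) := (hν_Icc j i).symm
        _ ≤ ν j i (Iic 1) := measure_mono Icc_subset_Iic_self
    · have hZr : Z j r = zfun ρ (G j) (t j r) := by simp only [hZdef]; rw [if_neg hr]
      rw [hZr, hνapp j i _ measurableSet_Iic,
        transport_Iic (hGmeas j) (hG01 j) (hρG0 j) hρatom (μ i) (hat i) (hρle i) (ht01 j r)]
  have hIoc : ∀ j i (r : Fin (n*(m-1)+1)),
      (p : ℝ≥0∞) * μ i (G j ∩ Ioc (Z j r.castSucc) (Z j r.succ)) =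
        ν j i (Ioc (t j r.castSucc) (t j r.succ)) := by
    intro j i r
    haveI := hν_prob j i
    haveI := hprob i
    have hZle : Z j r.castSucc ≤ Z j r.succ := hZmono j (Fin.castSucc_le_succ r)
    have htle : t j r.castSucc ≤ t j r.succ := htmono j (Fin.castSucc_le_succ r)
    have hsplit1 : μ i (G j ∩ Iic (Z j r.succ)) =
        μ i (G j ∩ Iic (Z j r.castSucc)) + μ i (G j ∩ Ioc (Z j r.castSucc) (Z j r.succ)) := by
      rw [← measure_union ?_ ((hGmeas j).inter measurableSet_Ioc),
        ← inter_union_distrib_left, Iic_union_Ioc_eq_Iic hZle]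
      exact Disjoint.mono inter_subset_right inter_subset_right (Iic_disjoint_Ioc le_rfl)
    have hsplit2 : ν j i (Iic (t j r.succ)) =
        ν j i (Iic (t j r.castSucc)) + ν j i (Ioc (t j r.castSucc) (t j r.succ)) := by
      rw [← measure_union (Iic_disjoint_Ioc le_rfl) measurableSet_Ioc,
        Iic_union_Ioc_eq_Iic htle]
    have e1 := hIic j i r.succ
    have e2 := hIic j i r.castSucc
    rw [hsplit1, mul_add, e2, hsplit2] at e1
    exact (ENNReal.add_right_inj (measure_ne_top _ _)).1 e1
    -- merged cut sequence
  have hcount : (n*(p-1)+2) + p * (n*(m-1)) = n*(p*m-1)+2 := by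
    have h1 : 1 ≤ p := by omega
    have h2 : 1 ≤ m := by omega
    have h3 : 1 ≤ p * m := by nlinarith
    zify [h1, h2, h3]
    ring
  set eqv : Fin (n*(p*m-1)+2) ≃ (Fin (n*(p-1)+2) ⊕ Fin p × Fin (n*(m-1))) :=
    (finCongr hcount.symm).trans
      (finSumFinEquiv.symm.trans (Equiv.sumCongr (Equiv.refl _) finProdFinEquiv.symm))
    with heqv
  set w0 : (Fin (n*(p-1)+2) ⊕ Fin p × Fin (n*(m-1))) → ℝ :=
    Sum.elim y (fun jr => Z jr.1 jr.2.succ.castSucc) with hw0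
  set w' : Fin (n*(p*m-1)+2) → ℝ := w0 ∘ eqv with hw'
  set σ := Tuple.sort w' with hσ
  set y' : Fin (n*(p*m-1)+2) → ℝ := w' ∘ σ with hy'
  have hy'mono : Monotone y' := Tuple.monotone_sort w'
  have hrange : range y' = range w' := by
    rw [hy']
    exact Function.Surjective.range_comp σ.surjective w'
  have hw01 : ∀ idx, w' idx ∈ Icc (0:ℝ) 1 := by
    intro idx
    rw [hw']
    simp only [Function.comp_apply]
    rcases h : eqv idx with s | jr
    · simp only [h, hw0, Sum.elim_inl]
      exact hy01 s
    · simp only [h, hw0, Sum.elim_inr]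
      exact hZ01 jr.1 _
  have hy'mem : ∀ s, y' s ∈ Icc (0:ℝ) 1 := by
    intro s
    rw [hy']
    exact hw01 _
  have hwrange : ∀ x : Fin (n*(p-1)+2) ⊕ Fin p × Fin (n*(m-1)), ∃ s, y' s = w0 x := by
    intro x
    have hmem : w0 x ∈ range w' := ⟨eqv.symm x, by rw [hw']; simp⟩
    rw [← hrange] at hmem
    exact hmem
  have hy'0 : y' 0 = 0 := by
    obtain ⟨s0, hs0⟩ := hwrange (Sum.inl 0)
    have h1 : y' s0 = 0 := by rw [hs0, hw0]; simpa using hy0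
    exact le_antisymm (h1 ▸ hy'mono (Fin.zero_le s0)) (hy'mem 0).1
  have hy'last : y' (Fin.last _) = 1 := by
    obtain ⟨s0, hs0⟩ := hwrange (Sum.inl (Fin.last _))
    have h1 : y' s0 = 1 := by rw [hs0, hw0]; simpa using hylast
    exact le_antisymm (hy'mem _).2 (h1 ▸ hy'mono (Fin.le_last s0))
  have hyrange : ∀ s' : Fin (n*(p-1)+2), ∃ s, y' s = y s' := by
    intro s'
    obtain ⟨s, hs⟩ := hwrange (Sum.inl s')
    exact ⟨s, by rw [hs, hw0]; simp⟩
  have hZrange : ∀ (j : Fin p) (r : Fin (n*(m-1)+2)), ∃ s, y' s = Z j r := by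
    intro j r
    by_cases hr0 : r = 0
    · exact ⟨0, by rw [hr0, hZ0 j, hy'0]⟩
    by_cases hrl : r = Fin.last _
    · exact ⟨Fin.last _, by rw [hrl, hZlast j, hy'last]⟩
    have hv0 : r.val ≠ 0 := fun h => hr0 (Fin.ext h)
    have hvl : r.val ≠ n*(m-1)+1 := fun h => hrl (Fin.ext h)
    have hlt : r.val - 1 < n*(m-1) := by have := r.isLt; omega
    obtain ⟨s, hs⟩ := hwrange (Sum.inr (j, ⟨r.val - 1, hlt⟩))
    refine ⟨s, ?_⟩
    rw [hs, hw0]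
    simp only [Sum.elim_inr]
    congr 1
    refine Fin.ext ?_
    simp only [Fin.coe_castSucc, Fin.val_succ]
    omega
  have hexS : ∀ q : Fin (n*(p*m-1)+1), y' q.castSucc < y' q.succ →
      ∃ s : Fin (n*(p-1)+1), y s.castSucc ≤ y' q.castSucc ∧ y' q.succ ≤ y s.succ := by
    intro q hq
    exact bracket_exists hy'mono hq (by rw [hy0]; exact (hy'mem q.castSucc).1)
      (by rw [hylast]; exact (hy'mem q.succ).2) hyrange
  choose S hS1 hS2 using hexS
  have hexR : ∀ (q : Fin (n*(p*m-1)+1)) (hq : y' q.castSucc < y' q.succ),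
      ∃ r : Fin (n*(m-1)+1), Z (f (S q hq)) r.castSucc ≤ y' q.castSucc ∧
        y' q.succ ≤ Z (f (S q hq)) r.succ := by
    intro q hq
    exact bracket_exists hy'mono hq (by rw [hZ0]; exact (hy'mem q.castSucc).1)
      (by rw [hZlast]; exact (hy'mem q.succ).2) (hZrange _)
  choose R hR1 hR2 using hexR
  set enc : Fin p × Fin m ≃ Fin (p*m) := finProdFinEquiv with henc
  set f' : Fin (n*(p*m-1)+1) → Fin (p*m) := fun q =>
    if hq : y' q.castSucc < y' q.succ
    then enc (f (S q hq), g (f (S q hq)) (R q hq))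
    else enc (⟨0, by omega⟩, ⟨0, by omega⟩) with hf'
  refine ⟨y', f', hy'mono, hy'0, hy'last, ?_⟩
  intro i J
  obtain ⟨⟨j, c⟩, rfl⟩ := enc.surjective J
  rw [meas_iUnion_Icc_eq_Ioc (μ i) (hat i)]
  have hseteq : (⋃ q : Fin (n*(p*m-1)+1), ⋃ (_ : f' q = enc (j,c)),
      Ioc (y' q.castSucc) (y' q.succ)) =
      ⋃ r : Fin (n*(m-1)+1), ⋃ (_ : g j r = c),
        (G j ∩ Ioc (Z j r.castSucc) (Z j r.succ)) := by
    ext x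
    simp only [mem_iUnion]
    constructor
    · rintro ⟨q, hfq, hx⟩
      have hq : y' q.castSucc < y' q.succ := lt_of_lt_of_le hx.1 hx.2
      rw [hf'] at hfq
      simp only [] at hfq
      rw [dif_pos hq] at hfq
      have hpair : (f (S q hq), g (f (S q hq)) (R q hq)) = (j, c) := enc.injective hfq
      have hjf : f (S q hq) = j := congrArg Prod.fst hpair
      have hgc : g j (R q hq) = c := by
        rw [← hjf]
        exact congrArg Prod.snd hpair
      refine ⟨R q hq, hgc, ?_, ?_⟩
      · simp only [hGdef, mem_iUnion]
        exact ⟨S q hq, hjf, Ioc_subset_Ioc (hS1 q hq) (hS2 q hq) hx⟩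
      · have h1 := hR1 q hq
        have h2 := hR2 q hq
        rw [hjf] at h1 h2
        exact Ioc_subset_Ioc h1 h2 hx
    · rintro ⟨r, hgr, hxG, hxZ⟩
      have hxG' := hxG
      simp only [hGdef, mem_iUnion] at hxG'
      obtain ⟨s, hfs, hxs⟩ := hxG'
      have hx01 : x ∈ Ioc (y' 0) (y' (Fin.last (n*(p*m-1)+1))) := by
        rw [hy'0, hy'last]
        exact ⟨lt_of_le_of_lt (hy0 ▸ (hy01 s.castSucc).1) hxs.1, hxs.2.trans (hy01 s.succ).2⟩
      obtain ⟨q, hxq⟩ := exists_piece hy'mono hx01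
      have hq : y' q.castSucc < y' q.succ := lt_of_lt_of_le hxq.1 hxq.2
      have hsS : S q hq = s := by
        by_contra hne
        exact Set.disjoint_left.1 (pieces_disjoint hymono hne)
          (Ioc_subset_Ioc (hS1 q hq) (hS2 q hq) hxq) hxs
      have hjf : f (S q hq) = j := by rw [hsS]; exact hfs
      have hrR : R q hq = r := by
        by_contra hne
        have h1 := hR1 q hq
        have h2 := hR2 q hq
        rw [hjf] at h1 h2
        exact Set.disjoint_left.1 (pieces_disjoint (hZmono j) hne)
          (Ioc_subset_Ioc h1 h2 hxq) hxZ
      refine ⟨q, ?_, hxq⟩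
      rw [hf']
      simp only []
      rw [dif_pos hq, hjf, hrR, hgr]
  rw [hseteq]
  have hmeas2 : ∀ r : Fin (n*(m-1)+1), MeasurableSet (⋃ (_ : g j r = c),
      (G j ∩ Ioc (Z j r.castSucc) (Z j r.succ))) :=
    fun r => MeasurableSet.iUnion fun _ => (hGmeas j).inter measurableSet_Ioc
  have hdisj2 : Pairwise (Function.onFun Disjoint (fun r : Fin (n*(m-1)+1) =>
      ⋃ (_ : g j r = c), (G j ∩ Ioc (Z j r.castSucc) (Z j r.succ)))) := by
    intro r r' hne
    refine Disjoint.mono ?_ ?_ (pieces_disjoint (hZmono j) hne)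
    · exact iUnion_subset fun _ => inter_subset_right
    · exact iUnion_subset fun _ => inter_subset_right
  rw [measure_iUnion hdisj2 hmeas2]
  have hterm : ∀ r : Fin (n*(m-1)+1),
      μ i (⋃ (_ : g j r = c), (G j ∩ Ioc (Z j r.castSucc) (Z j r.succ))) =
      (p:ℝ≥0∞)⁻¹ * ν j i (⋃ (_ : g j r = c), Ioc (t j r.castSucc) (t j r.succ)) := by
    intro r
    by_cases hc : g j r = c
    · simp only [hc, iUnion_true]
      rw [← hIoc j i r, ← mul_assoc, ENNReal.inv_mul_cancel hp0 hpT, one_mul]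
    · simp [hc]
  rw [tsum_congr hterm, ENNReal.tsum_mul_left]
  have hdisj3 : Pairwise (Function.onFun Disjoint (fun r : Fin (n*(m-1)+1) =>
      ⋃ (_ : g j r = c), Ioc (t j r.castSucc) (t j r.succ))) := by
    intro r r' hne
    refine Disjoint.mono ?_ ?_ (pieces_disjoint (htmono j) hne)
    · exact iUnion_subset fun _ => Subset.rfl
    · exact iUnion_subset fun _ => Subset.rfl
  rw [← measure_iUnion hdisj3 (fun r => MeasurableSet.iUnion fun _ => measurableSet_Ioc)]
  rw [← meas_iUnion_Icc_eq_Ioc (ν j i) (hν_atom j i), htM j i c]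
  simp only [one_div]
  rw [Nat.cast_mul, ENNReal.mul_inv (Or.inl hp0) (Or.inl hpT)]

/-- If the consensus equipartition theorem (Alon's splitting theorem) holds for every prime
`p`, then it holds for every integer `k ≥ 2`, with the optimal number `n(k-1)` of cuts. -/
theorem necklace_prime_case_implies_general
    (hprime : ∀ (p : ℕ), p.Prime → ∀ (n : ℕ), 1 ≤ n → ∀ μ : Fin n → Measure ℝ,
      (∀ i, IsProbabilityMeasure (μ i)) → (∀ i, μ i (Set.Icc (0 : ℝ) 1) = 1) →
      (∀ (i : Fin n) (x : ℝ), μ i {x} = 0) →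
      EquipartitionExists p n μ) :
    ∀ (k : ℕ), 2 ≤ k → ∀ (n : ℕ), 1 ≤ n → ∀ μ : Fin n → Measure ℝ,
      (∀ i, IsProbabilityMeasure (μ i)) → (∀ i, μ i (Set.Icc (0 : ℝ) 1) = 1) →
      (∀ (i : Fin n) (x : ℝ), μ i {x} = 0) →
      EquipartitionExists k n μ := by
  
  intro k
  induction k using Nat.strong_induction_on with
  | _ k IH =>
    intro hk n hn μ hprob hIcc hat
    by_cases hkp : k.Prime
    · exact hprime k hkp n hn μ hprob hIcc hat
    · have hqprime : k.minFac.Prime := Nat.minFac_prime (by omega)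
      have hdvd : k.minFac ∣ k := Nat.minFac_dvd k
      have hkm : k.minFac * (k / k.minFac) = k := Nat.mul_div_cancel' hdvd
      have hq2 : 2 ≤ k.minFac := hqprime.two_le
      have hm1 : 1 ≤ k / k.minFac := by
        rcases Nat.eq_zero_or_pos (k / k.minFac) with h | h
        · rw [h, Nat.mul_zero] at hkm; omega
        · exact h
      have hmne : k / k.minFac ≠ 1 := by
        intro h
        rw [h, Nat.mul_one] at hkm
        exact hkp (hkm ▸ hqprime)
      have hm2 : 2 ≤ k / k.minFac := by omega
      have hmlt : k / k.minFac < k := Nat.div_lt_self (by omega) (by omega)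
      have Hp := hprime k.minFac hqprime n hn μ hprob hIcc hat
      have Hm : ∀ ν : Fin n → Measure ℝ, (∀ i, IsProbabilityMeasure (ν i)) →
          (∀ i, ν i (Set.Icc (0:ℝ) 1) = 1) → (∀ (i : Fin n) (x : ℝ), ν i {x} = 0) →
          EquipartitionExists (k / k.minFac) n ν :=
        fun ν h1 h2 h3 => IH (k / k.minFac) hmlt hm2 n hn ν h1 h2 h3
      have hres := step_composite k.minFac (k / k.minFac) n hq2 hm2 hn μ hprob hIcc hat Hp Hm
      rw [hkm] at hres
      exact hres
end
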